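/- arXiv:1408.1462 — 2 statements merged into one kernel-verified Lean document; each statement's English description precedes it below -/
import Mathlib

section
/- Call an angle α a 'smooth angle' if it arises as the angle at the origin of a triangle with vertices 0, v₁, v₂, where v₁, v₂ ∈ ℤ² form a ℤ-basis of ℤ². Then for every c > 0 the set of smooth angles α with α ∈ [c, π − c] is finite. -/
open InnerProductGeometry Real

private lemma stmt8_coord_le (v : EuclideanSpace ℝ (Fin 2)) (i : Fin 2) : |v i| ≤ ‖v‖ := by
  rw [EuclideanSpace.norm_eq]
  have h1 : |v i| = Real.sqrt (‖v i‖ ^ 2) := by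
    rw [Real.sqrt_sq_eq_abs, Real.norm_eq_abs, abs_abs]
  rw [h1]
  apply Real.sqrt_le_sqrt
  exact Finset.single_le_sum (fun j _ => sq_nonneg ‖v j‖) (Finset.mem_univ i)

private lemma stmt8_sin_le {c α : ℝ} (hc : 0 < c) (h1 : c ≤ α) (h2 : α ≤ π - c) :
    Real.sin c ≤ Real.sin α := by
  have hc2 : c ≤ π / 2 := by linarith
  rcases le_or_gt α (π / 2) with h | h
  · exact Real.sin_le_sin_of_le_of_le_pi_div_two (by linarith [Real.pi_pos]) h h1
  · rw [← Real.sin_pi_sub α]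
    exact Real.sin_le_sin_of_le_of_le_pi_div_two (by linarith [Real.pi_pos]) (by linarith)
      (by linarith)

private noncomputable def stmt8_vec (q : ℤ × ℤ) : EuclideanSpace ℝ (Fin 2) :=
  (WithLp.equiv 2 (Fin 2 → ℝ)).symm ![(q.1 : ℝ), (q.2 : ℝ)]

set_option maxHeartbeats 1600000 in
/-- Discreteness of smooth angles: for every `c > 0`, the set of angles at the
origin of triangles `0, v₁, v₂` with `v₁, v₂ ∈ ℤ²` a ℤ-basis of ℤ² which lie in
`[c, π - c]` is finite. -/
theorem stmt8 (c : ℝ) (hc : 0 < c) :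
    Set.Finite ({α : ℝ | ∃ v₁ v₂ : EuclideanSpace ℝ (Fin 2),
        (∀ i, ∃ m : ℤ, v₁ i = (m : ℝ)) ∧ (∀ i, ∃ m : ℤ, v₂ i = (m : ℝ)) ∧
        (v₁ 0 * v₂ 1 - v₁ 1 * v₂ 0 = 1 ∨ v₁ 0 * v₂ 1 - v₁ 1 * v₂ 0 = -1) ∧
        α = InnerProductGeometry.angle v₁ v₂} ∩ Set.Icc c (Real.pi - c)) := by
  rcases lt_or_ge (π - c) c with hbig | hsmall
  · have : Set.Icc c (π - c) = ∅ := Set.Icc_eq_empty (not_le.mpr hbig)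
    rw [this, Set.inter_empty]
    exact Set.finite_empty
  -- now c ≤ π - c, so 0 < c ≤ π/2 and sin c > 0
  have hcpi : c < π := by linarith
  have hsc : 0 < Real.sin c := Real.sin_pos_of_pos_of_lt_pi hc hcpi
  set N : ℤ := ⌈1 / Real.sin c⌉ with hN
  have hN1 : (1 : ℝ) / Real.sin c ≤ (N : ℝ) := Int.le_ceil _
  set lo : (ℤ × ℤ) × ℤ × ℤ := ((-N, -N), (-N, -N))
  set hi : (ℤ × ℤ) × ℤ × ℤ := ((N, N), (N, N))
  have hfin : Set.Finite ((fun p : (ℤ × ℤ) × ℤ × ℤ =>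
      angle (stmt8_vec p.1) (stmt8_vec p.2)) '' Set.Icc lo hi) :=
    (Set.finite_Icc lo hi).image _
  apply hfin.subset
  rintro α ⟨⟨v₁, v₂, hv₁, hv₂, hdet, hα⟩, hαc, hαpi⟩
  obtain ⟨a, ha⟩ := hv₁ 0
  obtain ⟨b, hb⟩ := hv₁ 1
  obtain ⟨a', ha'⟩ := hv₂ 0
  obtain ⟨b', hb'⟩ := hv₂ 1
  -- key : sin α * (‖v₁‖ * ‖v₂‖) = 1
  have key := sin_angle_mul_norm_mul_norm v₁ v₂
  have hinner : ∀ x y : EuclideanSpace ℝ (Fin 2),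
      (inner ℝ x y : ℝ) = x 0 * y 0 + x 1 * y 1 := by
    intro x y
    simp [PiLp.inner_apply, Fin.sum_univ_two, mul_comm]
  rw [hinner v₁ v₁, hinner v₂ v₂, hinner v₁ v₂] at key
  have hdet2 : (v₁ 0 * v₁ 0 + v₁ 1 * v₁ 1) * (v₂ 0 * v₂ 0 + v₂ 1 * v₂ 1) -
      (v₁ 0 * v₂ 0 + v₁ 1 * v₂ 1) * (v₁ 0 * v₂ 0 + v₁ 1 * v₂ 1) =
      (v₁ 0 * v₂ 1 - v₁ 1 * v₂ 0) ^ 2 := by ring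
  rw [hdet2] at key
  have hd1 : (v₁ 0 * v₂ 1 - v₁ 1 * v₂ 0) ^ 2 = 1 := by
    rcases hdet with h | h <;> rw [h] <;> norm_num
  rw [hd1, Real.sqrt_one] at key
  rw [← hα] at key
  have hsinα : 0 < Real.sin α :=
    Real.sin_pos_of_pos_of_lt_pi (lt_of_lt_of_le hc hαc) (by linarith)
  have hsca : Real.sin c ≤ Real.sin α := stmt8_sin_le hc hαc hαpi
  have hprod : ‖v₁‖ * ‖v₂‖ = 1 / Real.sin α := by
    field_simp at key ⊢
    linarith [key]
  have hprodle : ‖v₁‖ * ‖v₂‖ ≤ (N : ℝ) := by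
    rw [hprod]
    calc 1 / Real.sin α ≤ 1 / Real.sin c := by
          apply div_le_div_of_nonneg_left one_pos.le hsc hsca
      _ ≤ (N : ℝ) := hN1
  -- each vector is nonzero with norm ≥ 1
  have hv1ne : v₁ ≠ 0 := by
    rintro rfl
    simp at hdet
  have hv2ne : v₂ ≠ 0 := by
    rintro rfl
    simp at hdet
  have hnorm1 : ∀ (v : EuclideanSpace ℝ (Fin 2)) (m₀ m₁ : ℤ), v 0 = m₀ → v 1 = m₁ →
      v ≠ 0 → 1 ≤ ‖v‖ := by
    intro v m₀ m₁ h₀ h₁ hne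
    have hsq : ‖v‖ ^ 2 = (m₀ : ℝ) ^ 2 + (m₁ : ℝ) ^ 2 := by
      rw [← real_inner_self_eq_norm_sq, hinner, h₀, h₁]; ring
    have hm : m₀ ≠ 0 ∨ m₁ ≠ 0 := by
      by_contra h
      push_neg at h
      apply hne
      ext i
      fin_cases i <;> simp_all
    have h1 : (1 : ℝ) ≤ (m₀ : ℝ) ^ 2 + (m₁ : ℝ) ^ 2 := by
      rcases hm with h | h
      · have h0 : (1 : ℤ) ≤ m₀ ^ 2 := by nlinarith [Int.one_le_abs h, sq_abs m₀]
        have h0r : (1 : ℝ) ≤ (m₀ : ℝ) ^ 2 := by exact_mod_cast h0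
        nlinarith [sq_nonneg ((m₁ : ℝ))]
      · have h0 : (1 : ℤ) ≤ m₁ ^ 2 := by nlinarith [Int.one_le_abs h, sq_abs m₁]
        have h0r : (1 : ℝ) ≤ (m₁ : ℝ) ^ 2 := by exact_mod_cast h0
        nlinarith [sq_nonneg ((m₀ : ℝ))]
    nlinarith [norm_nonneg v]
  have h1v1 : 1 ≤ ‖v₁‖ := hnorm1 v₁ a b ha hb hv1ne
  have h1v2 : 1 ≤ ‖v₂‖ := hnorm1 v₂ a' b' ha' hb' hv2ne
  have hb1 : ‖v₁‖ ≤ (N : ℝ) := by nlinarith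
  have hb2 : ‖v₂‖ ≤ (N : ℝ) := by nlinarith
  -- bounds on coordinates
  have hcoord : ∀ (v : EuclideanSpace ℝ (Fin 2)) (m : ℤ) (i : Fin 2), v i = m →
      ‖v‖ ≤ (N : ℝ) → -N ≤ m ∧ m ≤ N := by
    intro v m i hvi hvN
    have := (stmt8_coord_le v i).trans hvN
    rw [hvi] at this
    rw [abs_le] at this
    exact ⟨(Int.cast_le (R := ℝ)).mp (by rw [Int.cast_neg]; exact this.1), (Int.cast_le (R := ℝ)).mp this.2⟩
  obtain ⟨ha1, ha2⟩ := hcoord v₁ a 0 ha hb1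
  obtain ⟨hb1', hb2'⟩ := hcoord v₁ b 1 hb hb1
  obtain ⟨ha1', ha2'⟩ := hcoord v₂ a' 0 ha' hb2
  obtain ⟨hb1'', hb2''⟩ := hcoord v₂ b' 1 hb' hb2
  refine ⟨((a, b), (a', b')), ⟨?_, ?_⟩, ?_⟩
  · exact ⟨⟨ha1, hb1'⟩, ⟨ha1', hb1''⟩⟩
  · exact ⟨⟨ha2, hb2'⟩, ⟨ha2', hb2''⟩⟩
  · have e1 : stmt8_vec (a, b) = v₁ := by
      ext i
      fin_cases i <;>
        simp [stmt8_vec, WithLp.equiv, Equiv.refl_apply, ha, hb] <;> rfl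
    have e2 : stmt8_vec (a', b') = v₂ := by
      ext i
      fin_cases i <;>
        simp [stmt8_vec, WithLp.equiv, Equiv.refl_apply, ha', hb'] <;> rfl
    show angle (stmt8_vec (a, b)) (stmt8_vec (a', b')) = α
    rw [e1, e2]
    exact hα.symm
end

section
/- For the square Δ = [0, λ]² (λ > 0), the maximal admissible packing density is 1: the two admissible simplices ConvHull((0,0), (λ,0), (0,λ)) and ConvHull((λ,λ), (0,λ), (λ,0)) have disjoint interiors and their areas sum to the area of Δ. -/
open MeasureTheory
open scoped ENNReal

/-- The standard simplex of radius `r` in ℝ²: `ConvHull(0, r·e₁, r·e₂)`. -/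
def stdSimp (r : ℝ) : Set (Fin 2 → ℝ) :=
  convexHull ℝ {0, r • (Pi.single 0 1 : Fin 2 → ℝ), r • (Pi.single 1 1 : Fin 2 → ℝ)}

/-- `S` is an admissible simplex of the polygon `Δ`: the image of a standard simplex
`stdSimp r` under an affine map `x ↦ Ax + v` with `A ∈ GL(2,ℤ)`, centered at a
vertex `v` of `Δ` and contained in `Δ`. -/
def IsAdmissibleSimplex (Δ S : Set (Fin 2 → ℝ)) : Prop :=
  ∃ (A : Matrix (Fin 2) (Fin 2) ℝ) (v : Fin 2 → ℝ) (r : ℝ), 0 < r ∧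
    (∀ i j, ∃ m : ℤ, A i j = (m : ℝ)) ∧ (A.det = 1 ∨ A.det = -1) ∧
    v ∈ Set.extremePoints ℝ Δ ∧
    S = (fun x => A.mulVec x + v) '' stdSimp r ∧ S ⊆ Δ

/-- The optimal admissible packing density of `Δ`: the supremum over finite
families of admissible simplices with pairwise measure-zero overlaps of the
ratio of the total area to the area of `Δ`. -/
noncomputable def optDensity (Δ : Set (Fin 2 → ℝ)) : ℝ≥0∞ :=
  ⨆ (P : Finset (Set (Fin 2 → ℝ))) (_ : ∀ S ∈ P, IsAdmissibleSimplex Δ S)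
    (_ : (P : Set (Set (Fin 2 → ℝ))).Pairwise fun S T => volume (S ∩ T) = 0),
    (∑ S ∈ P, volume S) / volume Δ

/-! ### Auxiliary lemmas -/

lemma vec00 : (![0,0] : Fin 2 → ℝ) = 0 := by funext i; fin_cases i <;> rfl

lemma vecE0 (l : ℝ) : l • (Pi.single 0 1 : Fin 2 → ℝ) = ![l,0] := by
  funext i; fin_cases i <;> simp

lemma vecE1 (l : ℝ) : l • (Pi.single 1 1 : Fin 2 → ℝ) = ![0,l] := by
  funext i; fin_cases i <;> simp

lemma mem_tri {a b c x : Fin 2 → ℝ} {w₁ w₂ w₃ : ℝ} (h₁ : 0 ≤ w₁) (h₂ : 0 ≤ w₂)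
    (h₃ : 0 ≤ w₃) (hs : w₁ + w₂ + w₃ = 1) (hx : w₁ • a + w₂ • b + w₃ • c = x) :
    x ∈ convexHull ℝ ({a, b, c} : Set (Fin 2 → ℝ)) := by
  have := (convex_convexHull ℝ ({a, b, c} : Set (Fin 2 → ℝ))).sum_mem
    (t := Finset.univ) (w := ![w₁, w₂, w₃]) (z := ![a, b, c])
    (by intro i _; fin_cases i <;> simpa)
    (by simp [Fin.sum_univ_three, hs])
    (by intro i _; fin_cases i <;> exact subset_convexHull ℝ _ (by simp))
  rw [Fin.sum_univ_three] at this
  simpa [hx] using this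

lemma lin01 : IsLinearMap ℝ (fun x : Fin 2 → ℝ => x 0 + x 1) :=
  ⟨fun x y => by simp [Pi.add_apply]; ring, fun c x => by simp [Pi.smul_apply, smul_eq_mul]; ring⟩

lemma tri1_le (l : ℝ) (hl : 0 ≤ l) : convexHull ℝ ({![0,0], ![l,0], ![0,l]} : Set (Fin 2 → ℝ)) ⊆
    {x | x 0 + x 1 ≤ l} := by
  apply convexHull_min _ (convex_halfSpace_le lin01 l)
  rintro x (rfl | rfl | rfl) <;> simp [hl]

lemma tri2_ge (l : ℝ) (hl : 0 ≤ l) : convexHull ℝ ({![l,l], ![0,l], ![l,0]} : Set (Fin 2 → ℝ)) ⊆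
    {x | l ≤ x 0 + x 1} := by
  apply convexHull_min _ (convex_halfSpace_ge lin01 l)
  rintro x (rfl | rfl | rfl) <;> simp <;> linarith

lemma tri1_sub_Icc (l : ℝ) (hl : 0 ≤ l) :
    convexHull ℝ ({![0,0], ![l,0], ![0,l]} : Set (Fin 2 → ℝ)) ⊆ Set.Icc 0 (fun _ => l) := by
  apply convexHull_min _ (convex_Icc _ _)
  rintro x (rfl | rfl | rfl) <;>
    refine ⟨fun i => ?_, fun i => ?_⟩ <;> fin_cases i <;> simp [hl]

lemma tri2_sub_Icc (l : ℝ) (hl : 0 ≤ l) :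
    convexHull ℝ ({![l,l], ![0,l], ![l,0]} : Set (Fin 2 → ℝ)) ⊆ Set.Icc 0 (fun _ => l) := by
  apply convexHull_min _ (convex_Icc _ _)
  rintro x (rfl | rfl | rfl) <;>
    refine ⟨fun i => ?_, fun i => ?_⟩ <;> fin_cases i <;> simp [hl]

lemma zero_extreme (l : ℝ) (hl : 0 < l) :
    (0 : Fin 2 → ℝ) ∈ Set.extremePoints ℝ (Set.Icc 0 (fun _ => l)) := by
  refine ⟨⟨le_refl _, fun i => hl.le⟩, ?_⟩
  rintro x₁ hx₁ x₂ hx₂ ⟨a, b, ha, hb, hab, hsum⟩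
  funext i <;>
  · have h1 : 0 ≤ x₁ i := hx₁.1 i
    have h2 : 0 ≤ x₂ i := hx₂.1 i
    have := congrFun hsum i
    simp only [Pi.add_apply, Pi.smul_apply, smul_eq_mul, Pi.zero_apply] at this
    have e1 : x₁ i = 0 := by nlinarith
    have e2 : x₂ i = 0 := by nlinarith
    first
      | exact e1
      | exact e2

lemma top_extreme (l : ℝ) (hl : 0 < l) :
    (fun _ => l : Fin 2 → ℝ) ∈ Set.extremePoints ℝ (Set.Icc 0 (fun _ => l)) := by
  refine ⟨⟨fun i => hl.le, le_refl _⟩, ?_⟩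
  rintro x₁ hx₁ x₂ hx₂ ⟨a, b, ha, hb, hab, hsum⟩
  funext i <;>
  · have h1 : x₁ i ≤ l := hx₁.2 i
    have h2 : x₂ i ≤ l := hx₂.2 i
    have := congrFun hsum i
    simp only [Pi.add_apply, Pi.smul_apply, smul_eq_mul] at this
    have e1 : x₁ i = l := by nlinarith
    have e2 : x₂ i = l := by nlinarith
    first
      | exact e1
      | exact e2

lemma image_affine (A : Matrix (Fin 2) (Fin 2) ℝ) (v : Fin 2 → ℝ) (s : Set (Fin 2 → ℝ)) :
    (fun x => A.mulVec x + v) '' convexHull ℝ s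
      = convexHull ℝ ((fun x => A.mulVec x + v) '' s) := by
  let f : (Fin 2 → ℝ) →ᵃ[ℝ] (Fin 2 → ℝ) :=
    ⟨fun x => A.mulVec x + v, A.mulVecLin, by
      intro p q; simp [Matrix.mulVecLin_apply, Matrix.mulVec_add]; exact ⟨by ring, by ring⟩⟩
  exact f.image_convexHull s

lemma null_line (l : ℝ) (hl : l ≠ 0) : volume {x : Fin 2 → ℝ | x 0 + x 1 = l} = 0 := by
  set f : (Fin 2 → ℝ) →ₗ[ℝ] ℝ := IsLinearMap.mk' _ lin01 with hf
  have hfx : ∀ x : Fin 2 → ℝ, f x = x 0 + x 1 := fun x => rfl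
  set s : AffineSubspace ℝ (Fin 2 → ℝ) := AffineSubspace.mk' ![l, 0] (LinearMap.ker f)
  have hset : {x : Fin 2 → ℝ | x 0 + x 1 = l} = (s : Set (Fin 2 → ℝ)) := by
    ext x
    rw [Set.mem_setOf_eq, AffineSubspace.mem_coe, AffineSubspace.mem_mk',
      LinearMap.mem_ker]
    simp only [vsub_eq_sub, map_sub, hfx]
    simp
    constructor <;> intro h <;> linarith
  rw [hset]
  refine Measure.addHaar_affineSubspace volume s ?_
  intro hTop
  have h0 : (0 : Fin 2 → ℝ) ∈ s := by rw [hTop]; trivial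
  rw [AffineSubspace.mem_mk', LinearMap.mem_ker] at h0
  simp [hfx] at h0
  exact hl h0

lemma admissible_meas {Δ S : Set (Fin 2 → ℝ)} (h : IsAdmissibleSimplex Δ S) :
    MeasurableSet S := by
  obtain ⟨A, v, r, -, -, -, -, hS, -⟩ := h
  rw [hS, stdSimp, image_affine]
  exact (((Set.finite_singleton _).insert _ |>.insert _).image _).isCompact_convexHull ℝ
    |>.isClosed.measurableSet

lemma interior_sub_lt {l : ℝ} {S : Set (Fin 2 → ℝ)} (hS : S ⊆ {x | x 0 + x 1 ≤ l}) :
    interior S ⊆ {x | x 0 + x 1 < l} := by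
  intro x hx
  obtain ⟨ε, hε, hball⟩ := Metric.isOpen_iff.1 isOpen_interior x hx
  set y := x + (ε/2) • (Pi.single 0 1 : Fin 2 → ℝ) with hy
  have hyS : y ∈ S := interior_subset (hball (by
    rw [Metric.mem_ball, dist_eq_norm]
    have h : y - x = (ε/2) • (Pi.single 0 1 : Fin 2 → ℝ) := by rw [hy]; abel
    rw [h, norm_smul, Pi.norm_single, norm_one, mul_one, Real.norm_eq_abs,
      abs_of_pos (by linarith)]
    linarith))
  have h0 : y 0 = x 0 + ε/2 := by simp [hy]
  have h1 : y 1 = x 1 := by simp [hy]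
  have := hS hyS
  rw [Set.mem_setOf_eq, h0, h1] at this
  simpa using by linarith

lemma interior_sub_gt {l : ℝ} {S : Set (Fin 2 → ℝ)} (hS : S ⊆ {x | l ≤ x 0 + x 1}) :
    interior S ⊆ {x | l < x 0 + x 1} := by
  intro x hx
  obtain ⟨ε, hε, hball⟩ := Metric.isOpen_iff.1 isOpen_interior x hx
  set y := x - (ε/2) • (Pi.single 0 1 : Fin 2 → ℝ) with hy
  have hyS : y ∈ S := interior_subset (hball (by
    rw [Metric.mem_ball, dist_eq_norm]
    have h : y - x = -((ε/2) • (Pi.single 0 1 : Fin 2 → ℝ)) := by rw [hy]; abel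
    rw [h, norm_neg, norm_smul, Pi.norm_single, norm_one, mul_one, Real.norm_eq_abs,
      abs_of_pos (by linarith)]
    linarith))
  have h0 : y 0 = x 0 - ε/2 := by simp [hy]
  have h1 : y 1 = x 1 := by simp [hy]
  have := hS hyS
  rw [Set.mem_setOf_eq, h0, h1] at this
  simpa using by linarith

lemma union_tri (l : ℝ) (hl : 0 < l) :
    (convexHull ℝ ({![0,0], ![l,0], ![0,l]} : Set (Fin 2 → ℝ)))
      ∪ convexHull ℝ ({![l,l], ![0,l], ![l,0]} : Set (Fin 2 → ℝ))
      = Set.Icc 0 (fun _ => l) := by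
  apply Set.Subset.antisymm
  · exact Set.union_subset (tri1_sub_Icc l hl.le) (tri2_sub_Icc l hl.le)
  intro x hx
  have h0 : 0 ≤ x 0 := hx.1 0
  have h1 : 0 ≤ x 1 := hx.1 1
  have h0' : x 0 ≤ l := hx.2 0
  have h1' : x 1 ≤ l := hx.2 1
  rcases le_or_gt (x 0 + x 1) l with h | h
  · left
    refine mem_tri (w₁ := (l - x 0 - x 1)/l) (w₂ := x 0 / l) (w₃ := x 1 / l)
      (div_nonneg (by linarith) hl.le) (div_nonneg h0 hl.le) (div_nonneg h1 hl.le)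
      (by field_simp; try ring) ?_
    funext i; fin_cases i <;>
      · simp [Pi.add_apply, Pi.smul_apply, smul_eq_mul]
        try field_simp
        try ring
  · right
    refine mem_tri (w₁ := (x 0 + x 1 - l)/l) (w₂ := (l - x 0) / l) (w₃ := (l - x 1) / l)
      (div_nonneg (by linarith) hl.le) (div_nonneg (by linarith) hl.le)
      (div_nonneg (by linarith) hl.le)
      (by field_simp; try ring) ?_
    funext i; fin_cases i <;>
      · simp [Pi.add_apply, Pi.smul_apply, smul_eq_mul]
        try field_simp
        try ring

/-- For the square `Δ = [0, λ]²`, the maximal admissible packing density is `1`: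
the two admissible simplices `ConvHull((0,0),(λ,0),(0,λ))` and
`ConvHull((λ,λ),(0,λ),(λ,0))` have disjoint interiors and their areas sum to the
area of `Δ`. -/
theorem stmt9 (l : ℝ) (hl : 0 < l)
    (Δ : Set (Fin 2 → ℝ)) (hΔ : Δ = Set.Icc 0 (fun _ => l))
    (S₁ S₂ : Set (Fin 2 → ℝ))
    (hS₁ : S₁ = convexHull ℝ {![0, 0], ![l, 0], ![0, l]})
    (hS₂ : S₂ = convexHull ℝ {![l, l], ![0, l], ![l, 0]}) :
    IsAdmissibleSimplex Δ S₁ ∧ IsAdmissibleSimplex Δ S₂ ∧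
    interior S₁ ∩ interior S₂ = ∅ ∧
    volume S₁ + volume S₂ = volume Δ ∧
    optDensity Δ = 1 := by
  classical
  have hadm₁ : IsAdmissibleSimplex Δ S₁ := by
    refine ⟨1, 0, l, hl, ?_, Or.inl (by simp), ?_, ?_, ?_⟩
    · intro i j
      refine ⟨if i = j then 1 else 0, ?_⟩
      by_cases h : i = j <;> simp [Matrix.one_apply, h]
    · rw [hΔ]; exact zero_extreme l hl
    · have hid : (fun x : Fin 2 → ℝ => (1 : Matrix (Fin 2) (Fin 2) ℝ).mulVec x + 0) = id := by
        funext x; simp [Matrix.one_mulVec]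
      rw [hS₁, hid, Set.image_id, stdSimp, vecE0, vecE1, vec00]
    · rw [hS₁, hΔ]; exact tri1_sub_Icc l hl.le
  have hadm₂ : IsAdmissibleSimplex Δ S₂ := by
    refine ⟨-1, fun _ => l, l, hl, ?_, Or.inl (by simp [Matrix.det_neg]), ?_, ?_, ?_⟩
    · intro i j
      refine ⟨if i = j then -1 else 0, ?_⟩
      by_cases h : i = j <;> simp [Matrix.one_apply, h]
    · rw [hΔ]; exact top_extreme l hl
    · rw [hS₂, stdSimp, image_affine, Set.image_insert_eq, Set.image_insert_eq,
        Set.image_singleton]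
      congr 1
      have hm : ∀ x : Fin 2 → ℝ, (-1 : Matrix (Fin 2) (Fin 2) ℝ).mulVec x = -x := by
        intro x; rw [Matrix.neg_mulVec, Matrix.one_mulVec]
      rw [vecE0, vecE1]
      congr 1
      · funext i; fin_cases i <;> simp [hm]
      congr 1
      · funext i; fin_cases i <;> simp [hm]
      · congr 1; funext i; fin_cases i <;> simp [hm]
    · rw [hS₂, hΔ]; exact tri2_sub_Icc l hl.le
  have hle : S₁ ⊆ {x | x 0 + x 1 ≤ l} := hS₁ ▸ tri1_le l hl.le
  have hge : S₂ ⊆ {x | l ≤ x 0 + x 1} := hS₂ ▸ tri2_ge l hl.le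
  have hint : interior S₁ ∩ interior S₂ = ∅ := by
    rw [Set.eq_empty_iff_forall_notMem]
    rintro x ⟨hx₁, hx₂⟩
    have h1 := interior_sub_lt hle hx₁
    have h2 := interior_sub_gt hge hx₂
    rw [Set.mem_setOf_eq] at h1 h2
    linarith
  -- null intersection
  have hnull : volume (S₁ ∩ S₂) = 0 := by
    refine measure_mono_null ?_ (null_line l hl.ne')
    rintro x ⟨hx₁, hx₂⟩
    exact le_antisymm (hle hx₁) (hge hx₂)
  have hmeas₁ : MeasurableSet S₁ := admissible_meas hadm₁
  have hmeas₂ : MeasurableSet S₂ := admissible_meas hadm₂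
  have hunion : S₁ ∪ S₂ = Δ := by rw [hS₁, hS₂, hΔ]; exact union_tri l hl
  have hvol : volume S₁ + volume S₂ = volume Δ := by
    rw [← measure_union_add_inter S₁ hmeas₂, hunion, hnull, add_zero]
  have hΔvol : volume Δ = ENNReal.ofReal l * ENNReal.ofReal l := by
    rw [hΔ, Real.volume_Icc_pi]
    simp [Fin.prod_univ_two]
    rw [sq]
  have hΔ0 : volume Δ ≠ 0 := by
    rw [hΔvol]
    have h00 : ENNReal.ofReal l ≠ 0 := by simp [hl, ENNReal.ofReal_eq_zero, not_le]
    exact mul_ne_zero h00 h00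
  have hΔtop : volume Δ ≠ ⊤ := by
    rw [hΔvol]
    exact ENNReal.mul_ne_top ENNReal.ofReal_ne_top ENNReal.ofReal_ne_top
  refine ⟨hadm₁, hadm₂, hint, hvol, le_antisymm ?_ ?_⟩
  · -- upper bound
    refine iSup_le fun P => iSup_le fun hP => iSup_le fun hpair => ?_
    have hsum : ∑ S ∈ P, volume S = volume (⋃ S ∈ P, S) := by
      refine (measure_biUnion_finset₀ ?_ fun S hS => (admissible_meas (hP S hS)).nullMeasurableSet).symm
      exact hpair
    have hsub : (⋃ S ∈ P, S) ⊆ Δ := Set.iUnion₂_subset fun S hS => by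
      obtain ⟨A, v, r, -, -, -, -, -, h⟩ := hP S hS; exact h
    calc (∑ S ∈ P, volume S) / volume Δ ≤ volume Δ / volume Δ := by
          rw [hsum]
          exact ENNReal.div_le_div_right (measure_mono hsub) _
      _ ≤ 1 := ENNReal.div_self_le_one
  · -- lower bound
    have hne : S₁ ≠ S₂ := by
      intro hEq
      have hmem : (![0,0] : Fin 2 → ℝ) ∈ S₁ := by
        rw [hS₁]; exact subset_convexHull ℝ _ (by simp)
      rw [hEq] at hmem
      have := hge hmem
      rw [Set.mem_setOf_eq] at this
      norm_num at this
      linarith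
    set P : Finset (Set (Fin 2 → ℝ)) := {S₁, S₂} with hP
    have hadm : ∀ S ∈ P, IsAdmissibleSimplex Δ S := by
      intro S hS
      rw [hP, Finset.mem_insert, Finset.mem_singleton] at hS
      rcases hS with rfl | rfl
      · exact hadm₁
      · exact hadm₂
    have hpair : (↑P : Set (Set (Fin 2 → ℝ))).Pairwise fun S T => volume (S ∩ T) = 0 := by
      intro a ha b hb hab
      rw [hP] at ha hb
      simp only [Finset.coe_insert, Finset.coe_singleton, Set.mem_insert_iff,
        Set.mem_singleton_iff] at ha hb
      rcases ha with rfl | rfl <;> rcases hb with rfl | rfl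
      · exact absurd rfl hab
      · exact hnull
      · rw [Set.inter_comm]; exact hnull
      · exact absurd rfl hab
    refine le_iSup_of_le P (le_iSup_of_le hadm (le_iSup_of_le hpair ?_))
    rw [hP, Finset.sum_pair hne, hvol, ENNReal.div_self hΔ0 hΔtop]
end
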